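/- arXiv:2310.05689 — 5 statements merged into one kernel-verified Lean document; each statement's English description precedes it below -/
import Mathlib

section
/- Let n be a positive integer, A a symmetric n×n real matrix with nonnegative entries, D the diagonal matrix with D_{ii} = Σ_{j=1}^n A_{ij}, and L = D − A. Then the fundamental matrix Ω = (I + L)^{-1} is doubly stochastic: all its entries are nonnegative, and each row and each column sums to 1. -/
/-!
Write `M = 1 + L`. Since `L` kills constant vectors, `M *ᵥ 1 = 1`, and by symmetry also
`1 ᵥ* M = 1`; both identities pass to `M⁻¹`. Nonnegativity comes from a minimum principle:
if `M *ᵥ x = y` and `x` attains its minimum at `i`, then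
`y i = x i + ∑ j, A i j * (x i - x j) ≤ x i`, so `y ≥ 0` forces `x ≥ 0`. This also makes
`M *ᵥ ·` injective, hence `M` invertible, and the `j`-th column of `M⁻¹`, being the solution of
`M *ᵥ x = Pi.single j 1`, is nonnegative.
-/

open Matrix

namespace Matrix

variable {ι R : Type*} [Fintype ι] [DecidableEq ι]

section Ring

variable [Ring R]

def laplacian (A : Matrix ι ι R) : Matrix ι ι R :=
  diagonal (fun i => ∑ j, A i j) - A

lemma laplacian_mulVec_apply (A : Matrix ι ι R) (x : ι → R) (i : ι) :
    (laplacian A *ᵥ x) i = ∑ j, A i j * (x i - x j) := by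
  rw [laplacian, sub_mulVec, Pi.sub_apply, mulVec_diagonal, Finset.sum_mul]
  simp only [mulVec, dotProduct, mul_sub, Finset.sum_sub_distrib]

lemma laplacian_mulVec_one (A : Matrix ι ι R) : laplacian A *ᵥ 1 = 0 := by
  ext i
  simp [laplacian_mulVec_apply]

lemma IsSymm.laplacian {A : Matrix ι ι R} (hA : A.IsSymm) : (laplacian A).IsSymm :=
  (isSymm_diagonal _).sub hA

end Ring

lemma inv_mulVec_eq_self_of_mulVec_eq_self {K : Type*} [Field K] {M : Matrix ι ι K}
    (hM : IsUnit M) {v : ι → K} (hv : M *ᵥ v = v) : M⁻¹ *ᵥ v = v :=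
  calc M⁻¹ *ᵥ v = M⁻¹ *ᵥ (M *ᵥ v) := by rw [hv]
    _ = v := by rw [mulVec_mulVec, nonsing_inv_mul _ ((isUnit_iff_isUnit_det M).1 hM), one_mulVec]

variable [Field R] [LinearOrder R] [IsStrictOrderedRing R] {A : Matrix ι ι R}

lemma one_add_laplacian_mulVec_apply_le_of_isMin (hA : ∀ i j, 0 ≤ A i j) {x : ι → R} {i : ι}
    (hi : ∀ j, x i ≤ x j) : ((1 + laplacian A) *ᵥ x) i ≤ x i := by
  rw [add_mulVec, one_mulVec, Pi.add_apply, laplacian_mulVec_apply, add_le_iff_nonpos_right]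
  exact Finset.sum_nonpos fun j _ => mul_nonpos_of_nonneg_of_nonpos (hA i j) (sub_nonpos.2 (hi j))

lemma nonneg_of_one_add_laplacian_mulVec_nonneg (hA : ∀ i j, 0 ≤ A i j) {x : ι → R}
    (hx : 0 ≤ (1 + laplacian A) *ᵥ x) : 0 ≤ x := by
  intro k
  have : Nonempty ι := ⟨k⟩
  obtain ⟨i, hi⟩ := Finite.exists_min x
  exact (hx i).trans ((one_add_laplacian_mulVec_apply_le_of_isMin hA hi).trans (hi k))

lemma isUnit_one_add_laplacian (hA : ∀ i j, 0 ≤ A i j) : IsUnit (1 + laplacian A) := by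
  refine mulVec_injective_iff_isUnit.1 fun x y hxy => le_antisymm ?_ ?_ <;>
    refine sub_nonneg.1 (nonneg_of_one_add_laplacian_mulVec_nonneg hA ?_) <;>
    rw [mulVec_sub, hxy, sub_self]

lemma inv_one_add_laplacian_nonneg (hA : ∀ i j, 0 ≤ A i j) (i j : ι) :
    0 ≤ (1 + laplacian A)⁻¹ i j := by
  have hdet := (isUnit_iff_isUnit_det _).1 (isUnit_one_add_laplacian hA)
  have hcol : 0 ≤ (1 + laplacian A)⁻¹ *ᵥ Pi.single j 1 := by
    refine nonneg_of_one_add_laplacian_mulVec_nonneg hA ?_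
    rw [mulVec_mulVec, mul_nonsing_inv _ hdet, one_mulVec]
    exact Pi.single_nonneg.2 zero_le_one
  simpa [mulVec_single_one] using hcol i

theorem inv_one_add_laplacian_mem_doublyStochastic (hA : ∀ i j, 0 ≤ A i j) (hsym : A.IsSymm) :
    (1 + laplacian A)⁻¹ ∈ doublyStochastic R ι := by
  have hunit := isUnit_one_add_laplacian hA
  have hrow : (1 + laplacian A)⁻¹ *ᵥ 1 = 1 := by
    refine inv_mulVec_eq_self_of_mulVec_eq_self hunit ?_
    rw [add_mulVec, one_mulVec, laplacian_mulVec_one, add_zero]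
  have hinvSymm : (1 + laplacian A)⁻¹.IsSymm := (isSymm_one.add hsym.laplacian).inv
  refine ⟨inv_one_add_laplacian_nonneg hA, hrow, ?_⟩
  rw [← mulVec_transpose, hinvSymm.eq, hrow]

end Matrix

theorem stmt_5_general (n : ℕ) (A : Matrix (Fin n) (Fin n) ℝ)
    (hA : ∀ i j, 0 ≤ A i j) (hsym : ∀ i j, A i j = A j i)
    (D : Matrix (Fin n) (Fin n) ℝ) (hD : D = Matrix.diagonal (fun i => ∑ j, A i j))
    (L : Matrix (Fin n) (Fin n) ℝ) (hL : L = D - A) :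
    (∀ i j, 0 ≤ (1 + L)⁻¹ i j) ∧
      (∀ i, ∑ j, (1 + L)⁻¹ i j = 1) ∧
      (∀ j, ∑ i, (1 + L)⁻¹ i j = 1) := by
  subst hD hL
  exact mem_doublyStochastic_iff_sum.1
    (inv_one_add_laplacian_mem_doublyStochastic hA (IsSymm.ext fun i j => hsym j i))

/-- For a symmetric nonnegative weight matrix `A` (undirected graph), the fundamental matrix
`Ω = (I + L)⁻¹` is doubly stochastic: all entries are nonnegative and each row and column
sums to `1`. -/
theorem stmt_5 (n : ℕ) (hn : 0 < n) (A : Matrix (Fin n) (Fin n) ℝ)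
    (hA : ∀ i j, 0 ≤ A i j) (hsym : ∀ i j, A i j = A j i)
    (D : Matrix (Fin n) (Fin n) ℝ) (hD : D = Matrix.diagonal (fun i => ∑ j, A i j))
    (L : Matrix (Fin n) (Fin n) ℝ) (hL : L = D - A) :
    (∀ i j, 0 ≤ (1 + L)⁻¹ i j) ∧
      (∀ i, ∑ j, (1 + L)⁻¹ i j = 1) ∧
      (∀ j, ∑ i, (1 + L)⁻¹ i j = 1) :=
  stmt_5_general n A hA hsym D hD L hL
end

section
/- Let n be a positive integer, A a symmetric n×n real matrix with nonnegative entries, D the diagonal matrix with D_{ii} = Σ_{j=1}^n A_{ij}, and L = D − A. Then for every internal opinion vector x ∈ ℝ^n, the equilibrium expressed opinion vector z = (I + L)^{-1} x satisfies Σ_{i=1}^n z_i = Σ_{i=1}^n x_i; that is, on undirected graphs the overall expressed opinion equals the overall internal opinion. -/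
/-!
Since `A ≥ 0`, the diagonal entry `1 + ∑_{j ≠ i} A i j` of `1 + L` strictly dominates the
off-diagonal row sum `∑_{j ≠ i} A i j`, so `1 + L` is invertible by Gershgorin's theorem.
Symmetry of `A` makes the column sums of `L` vanish, i.e. `𝟙ᵀ (1 + L) = 𝟙ᵀ`; hence
`𝟙ᵀ (1 + L)⁻¹ = 𝟙ᵀ` and `∑ z = 𝟙ᵀ (1 + L)⁻¹ x = ∑ x`.
-/

open Matrix Finset

namespace Matrix

variable {ι R : Type*} [Fintype ι] [DecidableEq ι]

def weightedLaplacian [Ring R] (A : Matrix ι ι R) : Matrix ι ι R :=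
  diagonal (fun i => ∑ j, A i j) - A

section Ring

variable [Ring R] (A : Matrix ι ι R)

theorem weightedLaplacian_apply_of_ne {i j : ι} (h : i ≠ j) :
    weightedLaplacian A i j = -A i j := by
  simp [weightedLaplacian, diagonal_apply_ne _ h]

theorem weightedLaplacian_apply_self (i : ι) :
    weightedLaplacian A i i = ∑ j ∈ univ.erase i, A i j := by
  rw [weightedLaplacian, sub_apply, diagonal_apply_eq, sum_erase_eq_sub (mem_univ i)]

theorem one_vecMul_weightedLaplacian {A : Matrix ι ι R} (hA : A.IsSymm) :
    1 ᵥ* weightedLaplacian A = 0 := by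
  ext j
  rw [weightedLaplacian, vecMul_sub, Pi.sub_apply, vecMul_diagonal, Pi.one_apply, one_mul,
    Pi.zero_apply, sub_eq_zero, vecMul, one_dotProduct]
  exact sum_congr rfl fun i _ => hA.apply i j

end Ring

theorem det_one_add_weightedLaplacian_ne_zero {A : Matrix ι ι ℝ} (hA : ∀ i j, 0 ≤ A i j) :
    (1 + weightedLaplacian A).det ≠ 0 := by
  refine det_ne_zero_of_sum_row_lt_diag fun k => ?_
  have hoff : ∀ j ∈ univ.erase k, ‖(1 + weightedLaplacian A) k j‖ = A k j := fun j hj => by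
    have hkj : k ≠ j := (ne_of_mem_erase hj).symm
    rw [add_apply, one_apply_ne hkj, zero_add, weightedLaplacian_apply_of_ne A hkj, norm_neg,
      Real.norm_of_nonneg (hA k j)]
  have hdeg : 0 ≤ ∑ j ∈ univ.erase k, A k j := sum_nonneg fun j _ => hA k j
  rw [sum_congr rfl hoff, add_apply, one_apply_eq, weightedLaplacian_apply_self,
    Real.norm_of_nonneg (by positivity)]
  exact lt_one_add _

theorem sum_inv_mulVec_of_one_vecMul [CommRing R] {M : Matrix ι ι R} (hM : IsUnit M.det)
    (hcol : 1 ᵥ* M = 1) (x : ι → R) : ∑ i, (M⁻¹ *ᵥ x) i = ∑ i, x i := by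
  rw [← one_dotProduct, dotProduct_mulVec, ← hcol, vecMul_vecMul, mul_nonsing_inv _ hM,
    vecMul_one, one_dotProduct]

end Matrix

open Matrix in
theorem stmt_6_general (n : ℕ) (A : Matrix (Fin n) (Fin n) ℝ)
    (hA : ∀ i j, 0 ≤ A i j) (hsym : ∀ i j, A i j = A j i)
    (D : Matrix (Fin n) (Fin n) ℝ) (hD : D = Matrix.diagonal (fun i => ∑ j, A i j))
    (L : Matrix (Fin n) (Fin n) ℝ) (hL : L = D - A) :
    ∀ x : Fin n → ℝ, ∑ i, ((1 + L)⁻¹ *ᵥ x) i = ∑ i, x i := by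
  subst hD hL
  have hcol : 1 ᵥ* (1 + weightedLaplacian A) = 1 := by
    rw [vecMul_add, vecMul_one, one_vecMul_weightedLaplacian (IsSymm.ext fun i j => hsym j i),
      add_zero]
  exact sum_inv_mulVec_of_one_vecMul (det_one_add_weightedLaplacian_ne_zero hA).isUnit hcol

open Matrix in
/-- On undirected graphs (symmetric `A`), the overall equilibrium expressed opinion equals the
overall internal opinion: `∑ i, z_i = ∑ i, x_i` where `z = (I + L)⁻¹ x`. -/
theorem stmt_6 (n : ℕ) (hn : 0 < n) (A : Matrix (Fin n) (Fin n) ℝ)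
    (hA : ∀ i j, 0 ≤ A i j) (hsym : ∀ i j, A i j = A j i)
    (D : Matrix (Fin n) (Fin n) ℝ) (hD : D = Matrix.diagonal (fun i => ∑ j, A i j))
    (L : Matrix (Fin n) (Fin n) ℝ) (hL : L = D - A) :
    ∀ x : Fin n → ℝ, ∑ i, ((1 + L)⁻¹ *ᵥ x) i = ∑ i, x i :=
  stmt_6_general n A hA hsym D hD L hL
end

section
/- There exist a positive integer n, an n×n real matrix A with nonnegative entries (necessarily not symmetric), and a vector x ∈ ℝ^n such that, with D the diagonal matrix with D_{ii} = Σ_{j=1}^n A_{ij} and L = D − A, the equilibrium expressed opinion vector z = (I + L)^{-1} x satisfies Σ_{i=1}^n z_i ≠ Σ_{i=1}^n x_i; that is, on directed graphs the conservation of total opinion can fail. -/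
open Matrix in
/-- On directed graphs conservation of total opinion can fail: there exist `n`, a nonnegative
weight matrix `A`, and internal opinions `x` such that, with `L = D − A`,
`∑ i, ((I + L)⁻¹ x)_i ≠ ∑ i, x_i`. -/
theorem stmt_7 :
    ∃ (n : ℕ), 0 < n ∧ ∃ (A : Matrix (Fin n) (Fin n) ℝ) (x : Fin n → ℝ),
      (∀ i j, 0 ≤ A i j) ∧
      ∑ i, (((1 + (Matrix.diagonal (fun i => ∑ j, A i j) - A))⁻¹ *ᵥ x) i) ≠ ∑ i, x i := by
  refine ⟨2, by norm_num, !![0,1;0,0], ![1,0], ?_, ?_⟩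
  · intro i j
    fin_cases i <;> fin_cases j <;> norm_num
  · have hM : (1 + (Matrix.diagonal (fun i => ∑ j, (!![0,1;0,0] : Matrix (Fin 2) (Fin 2) ℝ) i j) - !![0,1;0,0])) = !![2,-1;0,1] := by
      ext i j
      fin_cases i <;> fin_cases j <;>
        norm_num [Matrix.diagonal_apply, Matrix.one_apply, Fin.sum_univ_two]
    rw [hM]
    have hinv : (!![2,-1;0,1] : Matrix (Fin 2) (Fin 2) ℝ)⁻¹ = !![1/2, 1/2; 0, 1] := by
      rw [Matrix.inv_def, Matrix.adjugate_fin_two, Matrix.det_fin_two_of]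
      norm_num
    rw [hinv]
    norm_num [Fin.sum_univ_two, Matrix.mulVec, dotProduct]
end

section
/- Let n be a positive integer, A an n×n real matrix with nonnegative entries, D the diagonal matrix with D_{ii} = Σ_{j=1}^n A_{ij}, L = D − A, and x ∈ ℝ^n. For any initial vector x^{(0)} ∈ ℝ^n, define the sequence x^{(k)} by x_i^{(k+1)} = (x_i + Σ_{j=1}^n A_{ij} x_j^{(k)})/(1 + d_i). Then x^{(k)} converges as k → ∞ to the vector z = (I + L)^{-1} x. -/
open Matrix in
/-- The Friedkin–Johnsen dynamics converges: for any initial expressed opinions `x⁰`, the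
sequence `x_i^{(k+1)} = (x_i + ∑_j A_{ij} x_j^{(k)}) / (1 + d_i)` converges to
`z = (I + L)⁻¹ x`. -/
theorem stmt_9 (n : ℕ) (hn : 0 < n) (A : Matrix (Fin n) (Fin n) ℝ)
    (hA : ∀ i j, 0 ≤ A i j)
    (D : Matrix (Fin n) (Fin n) ℝ) (hD : D = Matrix.diagonal (fun i => ∑ j, A i j))
    (L : Matrix (Fin n) (Fin n) ℝ) (hL : L = D - A)
    (x x0 : Fin n → ℝ) (seq : ℕ → Fin n → ℝ)
    (h0 : seq 0 = x0)
    (hstep : ∀ k i, seq (k + 1) i = (x i + ∑ j, A i j * seq k j) / (1 + ∑ j, A i j)) :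
    Filter.Tendsto seq Filter.atTop (nhds ((1 + L)⁻¹ *ᵥ x)) := by
  set d : Fin n → ℝ := fun i => ∑ j, A i j with hdef
  have hd : ∀ i, (0:ℝ) ≤ d i := fun i => Finset.sum_nonneg fun j _ => hA i j
  have hd1 : ∀ i, (0:ℝ) < 1 + d i := fun i => by linarith [hd i]
  -- invertibility of 1 + L
  have hdet : (1 + L).det ≠ 0 := by
    apply det_ne_zero_of_sum_row_lt_diag
    intro k
    have hAk : ∑ j ∈ Finset.univ.erase k, A k j = d k - A k k := by
      have := Finset.sum_erase_add Finset.univ (fun j => A k j) (Finset.mem_univ k)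
      simp [hdef]
    have h1 : ∀ j ∈ Finset.univ.erase k, ‖(1 + L) k j‖ = A k j := by
      intro j hj
      have hjk : j ≠ k := Finset.ne_of_mem_erase hj
      simp [hL, hD, Matrix.add_apply, Matrix.sub_apply, Matrix.one_apply, Matrix.diagonal_apply,
        Ne.symm hjk, abs_of_nonneg (hA k j), Real.norm_eq_abs]
    rw [Finset.sum_congr rfl h1, hAk]
    have h2 : (1 + L) k k = 1 + d k - A k k := by
      simp [hL, hD, Matrix.add_apply, Matrix.sub_apply, Matrix.one_apply, hdef]
      ring
    rw [h2, Real.norm_eq_abs]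
    have hAkk : A k k ≤ d k := Finset.single_le_sum (fun j _ => hA k j) (Finset.mem_univ k)
    rw [abs_of_pos (by linarith)]
    linarith
  set z := (1 + L)⁻¹ *ᵥ x with hz
  have h1 : (1 + L) *ᵥ z = x := by
    rw [hz, Matrix.mulVec_mulVec, Matrix.mul_nonsing_inv _ (isUnit_iff_ne_zero.mpr hdet), Matrix.one_mulVec]
  have hfix : ∀ i, z i = (x i + ∑ j, A i j * z j) / (1 + d i) := by
    intro i
    have h2 := congrFun h1 i
    rw [hL, hD, Matrix.add_mulVec, Matrix.sub_mulVec, Matrix.one_mulVec] at h2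
    simp only [Pi.add_apply, Pi.sub_apply, Matrix.mulVec_diagonal, Matrix.mulVec,
      dotProduct] at h2
    simp only [Matrix.diagonal_apply, ite_mul, zero_mul, Finset.sum_ite_eq,
      Finset.mem_univ, if_true] at h2
    rw [eq_div_iff (hd1 i).ne']
    simp only [hdef] at h2 ⊢
    linarith
  -- contraction constants
  have hne : (Finset.univ : Finset (Fin n)).Nonempty := ⟨⟨0, hn⟩, Finset.mem_univ _⟩
  set ρ : ℝ := Finset.univ.sup' hne (fun i => d i / (1 + d i)) with hρ
  set M : ℝ := Finset.univ.sup' hne (fun i => |x0 i - z i|) with hM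
  have hρle : ∀ i, d i / (1 + d i) ≤ ρ := fun i => Finset.le_sup' (fun i => d i / (1 + d i)) (Finset.mem_univ i)
  have hMle : ∀ i, |x0 i - z i| ≤ M := fun i => Finset.le_sup' (fun i => |x0 i - z i|) (Finset.mem_univ i)
  have hρ0 : 0 ≤ ρ := le_trans (div_nonneg (hd ⟨0, hn⟩) (hd1 ⟨0, hn⟩).le) (hρle ⟨0, hn⟩)
  have hρ1 : ρ < 1 := by
    rw [hρ, Finset.sup'_lt_iff]
    intro i _
    rw [div_lt_one (hd1 i)]
    linarith [hd i]
  have hM0 : 0 ≤ M := le_trans (abs_nonneg _) (hMle ⟨0, hn⟩)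
  -- geometric bound
  have key : ∀ k i, |seq k i - z i| ≤ ρ ^ k * M := by
    intro k
    induction k with
    | zero => intro i; simpa [h0] using hMle i
    | succ k ih =>
      intro i
      have hstep' : seq (k+1) i - z i = (∑ j, A i j * (seq k j - z j)) / (1 + d i) := by
        rw [hstep k i, hfix i, div_sub_div_same]
        congr 1
        simp only [mul_sub, Finset.sum_sub_distrib]
        ring
      rw [hstep', abs_div, abs_of_pos (hd1 i)]
      have hb : |∑ j, A i j * (seq k j - z j)| ≤ d i * (ρ ^ k * M) := by
        calc |∑ j, A i j * (seq k j - z j)| ≤ ∑ j, |A i j * (seq k j - z j)| :=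
              Finset.abs_sum_le_sum_abs _ _
          _ ≤ ∑ j, A i j * (ρ ^ k * M) := by
              apply Finset.sum_le_sum
              intro j _
              rw [abs_mul, abs_of_nonneg (hA i j)]
              exact mul_le_mul_of_nonneg_left (ih j) (hA i j)
          _ = d i * (ρ ^ k * M) := by rw [← Finset.sum_mul]
      calc |∑ j, A i j * (seq k j - z j)| / (1 + d i) ≤ d i * (ρ ^ k * M) / (1 + d i) := by
            gcongr
            exact (hd1 i).le
        _ = (d i / (1 + d i)) * (ρ ^ k * M) := by ring
        _ ≤ ρ * (ρ ^ k * M) :=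
            mul_le_mul_of_nonneg_right (hρle i) (mul_nonneg (pow_nonneg hρ0 _) hM0)
        _ = ρ ^ (k+1) * M := by ring
  rw [tendsto_pi_nhds]
  intro i
  rw [← tendsto_sub_nhds_zero_iff]
  have hgeo : Filter.Tendsto (fun k => ρ ^ k * M) Filter.atTop (nhds 0) := by
    simpa using (tendsto_pow_atTop_nhds_zero_of_lt_one hρ0 hρ1).mul_const M
  exact squeeze_zero_norm (fun k => by simpa [Real.norm_eq_abs] using key k i) hgeo
end

section
/- Let n be a positive integer, A an n×n real matrix with nonnegative entries, D the diagonal matrix with D_{ii} = Σ_{j=1}^n A_{ij}, and L = D − A. Then for any indices i and j, the entry ω_{ij} of Ω = (I + L)^{-1} is strictly positive if and only if there exists a nonnegative integer k such that (A^k)_{ij} > 0 (equivalently, i = j or there is a directed path of positive-weight arcs from i to j); otherwise ω_{ij} = 0. -/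
/-!
Put `m i = 1 + ∑ j, A i j`. Then `1 + L = diagonal m - A = diagonal m * (1 - B)` with
`B = diagonal m⁻¹ * A`, whose row sums are `< 1`. Hence `(1 + L)⁻¹ = (∑ₖ Bᵏ) * diagonal m⁻¹` is a
convergent Neumann series of nonnegative matrices, so an entry is positive iff the same entry of
some `Bᵏ` is. Finally `B` and `A` have the same positive entries, hence the same digraph, and the
positive entries of their powers are the endpoints of paths in that digraph.
-/

open Matrix

theorem HasSum.pos_iff_exists_pos {β : Type*} {f : β → ℝ} {a : ℝ} (hf : HasSum f a)
    (h0 : ∀ k, 0 ≤ f k) : 0 < a ↔ ∃ k, 0 < f k := by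
  refine ⟨fun ha => ?_, fun ⟨k, hk⟩ => hasSum_lt h0 hk hasSum_zero hf⟩
  by_contra! h
  have : f = 0 := funext fun k => (h k).antisymm (h0 k)
  subst this
  exact ha.ne (hf.unique hasSum_zero).symm

namespace Matrix

variable {ι : Type*} [Fintype ι]

theorem pos_of_sum_lt {A : Matrix ι ι ℝ} {m : ι → ℝ} (hA : ∀ i j, 0 ≤ A i j)
    (hm : ∀ i, ∑ j, A i j < m i) (i : ι) : 0 < m i :=
  (Finset.sum_nonneg fun j _ => hA i j).trans_lt (hm i)

variable [DecidableEq ι]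

theorem pow_apply_pos_iff_of_pos_iff {R : Type*} [Ring R] [LinearOrder R] [IsStrictOrderedRing R]
    {A B : Matrix ι ι R} (hA : ∀ i j, 0 ≤ A i j)
    (hB : ∀ i j, 0 ≤ B i j) (hAB : ∀ i j, 0 < A i j ↔ 0 < B i j) (k : ℕ) (i j : ι) :
    0 < (A ^ k) i j ↔ 0 < (B ^ k) i j := by
  have hQ : toQuiver A = toQuiver B := by
    unfold toQuiver
    simp_rw [hAB]
  rw [pow_apply_pos_iff_nonempty_path hA, pow_apply_pos_iff_nonempty_path hB, hQ]

theorem hasSum_pow_apply_inv_one_sub {B : Matrix ι ι ℝ} (hB : ∀ i, ∑ j, |B i j| < 1) (i j : ι) :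
    HasSum (fun k => (B ^ k) i j) ((1 - B)⁻¹ i j) := by
  let _ : NormedRing (Matrix ι ι ℝ) := Matrix.linftyOpNormedRing
  let _ : NormedAlgebra ℝ (Matrix ι ι ℝ) := Matrix.linftyOpNormedAlgebra
  have hnorm : ‖B‖ < 1 := by
    have : ‖B‖₊ < 1 := by
      rw [linfty_opNNNorm_def, Finset.sup_lt_iff zero_lt_one]
      intro i _
      rw [← NNReal.coe_lt_coe]
      simpa using hB i
    exact_mod_cast this
  have hsum : HasSum (fun k => B ^ k) (1 - B)⁻¹ := by
    rw [nonsing_inv_eq_ringInverse]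
    exact hasSum_geom_series_inverse B hnorm
  exact Pi.hasSum.mp (Pi.hasSum.mp hsum i) j

theorem inv_diagonal_sub_eq {A : Matrix ι ι ℝ} {m : ι → ℝ} (hm : ∀ i, m i ≠ 0) :
    (diagonal m - A)⁻¹ = (1 - diagonal m⁻¹ * A)⁻¹ * diagonal m⁻¹ := by
  have hfac : diagonal m - A = diagonal m * (1 - diagonal m⁻¹ * A) := by
    rw [mul_sub, mul_one, ← Matrix.mul_assoc, diagonal_mul_diagonal]
    simp [mul_inv_cancel₀ (hm _)]
  have hinv : (diagonal m)⁻¹ = diagonal m⁻¹ :=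
    inv_eq_right_inv (by simp [diagonal_mul_diagonal, mul_inv_cancel₀ (hm _)])
  rw [hfac, mul_inv_rev, hinv]

theorem diagonal_inv_mul_nonneg {A : Matrix ι ι ℝ} {m : ι → ℝ} (hA : ∀ i j, 0 ≤ A i j)
    (hm : ∀ i, 0 < m i) (i j : ι) : 0 ≤ (diagonal m⁻¹ * A) i j := by
  rw [diagonal_mul]
  exact mul_nonneg (inv_nonneg.mpr (hm i).le) (hA i j)

theorem hasSum_inv_diagonal_sub_apply {A : Matrix ι ι ℝ} {m : ι → ℝ} (hA : ∀ i j, 0 ≤ A i j)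
    (hm : ∀ i, ∑ j, A i j < m i) (i j : ι) :
    HasSum (fun k => ((diagonal m⁻¹ * A) ^ k) i j * (m j)⁻¹) ((diagonal m - A)⁻¹ i j) := by
  have hm0 := pos_of_sum_lt hA hm
  have hB : ∀ i, ∑ j, |(diagonal m⁻¹ * A) i j| < 1 := fun i => by
    simp only [diagonal_mul, Pi.inv_apply, abs_mul, abs_inv, abs_of_pos (hm0 i),
      abs_of_nonneg (hA i _), ← Finset.mul_sum]
    exact (inv_mul_lt_one₀ (hm0 i)).mpr (hm i)
  rw [inv_diagonal_sub_eq fun i => (hm0 i).ne', mul_diagonal]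
  exact (hasSum_pow_apply_inv_one_sub hB i j).mul_right _

theorem inv_diagonal_sub_apply_nonneg {A : Matrix ι ι ℝ} {m : ι → ℝ} (hA : ∀ i j, 0 ≤ A i j)
    (hm : ∀ i, ∑ j, A i j < m i) (i j : ι) : 0 ≤ (diagonal m - A)⁻¹ i j :=
  have hm0 := pos_of_sum_lt hA hm
  (hasSum_inv_diagonal_sub_apply hA hm i j).nonneg fun k =>
    mul_nonneg (pow_apply_nonneg (diagonal_inv_mul_nonneg hA hm0) k i j) (inv_pos.mpr (hm0 j)).le

theorem inv_diagonal_sub_apply_pos_iff {A : Matrix ι ι ℝ} {m : ι → ℝ} (hA : ∀ i j, 0 ≤ A i j)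
    (hm : ∀ i, ∑ j, A i j < m i) (i j : ι) :
    0 < (diagonal m - A)⁻¹ i j ↔ ∃ k, 0 < (A ^ k) i j := by
  have hm0 := pos_of_sum_lt hA hm
  have hB := diagonal_inv_mul_nonneg hA hm0
  rw [(hasSum_inv_diagonal_sub_apply hA hm i j).pos_iff_exists_pos fun k =>
    mul_nonneg (pow_apply_nonneg hB k i j) (inv_pos.mpr (hm0 j)).le]
  refine exists_congr fun k => ?_
  rw [mul_pos_iff_of_pos_right (inv_pos.mpr (hm0 j)),
    pow_apply_pos_iff_of_pos_iff hA hB (fun i j => ?_)]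
  rw [diagonal_mul, Pi.inv_apply, mul_pos_iff_of_pos_left (inv_pos.mpr (hm0 i))]

end Matrix

theorem stmt_13_general (n : ℕ) (A : Matrix (Fin n) (Fin n) ℝ)
    (hA : ∀ i j, 0 ≤ A i j)
    (D : Matrix (Fin n) (Fin n) ℝ) (hD : D = Matrix.diagonal (fun i => ∑ j, A i j))
    (L : Matrix (Fin n) (Fin n) ℝ) (hL : L = D - A) :
    ∀ i j, (0 < (1 + L)⁻¹ i j ↔ ∃ k : ℕ, 0 < (A ^ k) i j) ∧
      ((¬ ∃ k : ℕ, 0 < (A ^ k) i j) → (1 + L)⁻¹ i j = 0) := by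
  have hdom : ∀ i, ∑ j, A i j < 1 + ∑ j, A i j := fun i => lt_one_add _
  have hIL : 1 + L = diagonal (fun i => 1 + ∑ j, A i j) - A := by
    rw [hL, hD, ← add_sub_assoc, ← diagonal_one, diagonal_add]
  intro i j
  rw [hIL, ← inv_diagonal_sub_apply_pos_iff hA hdom i j]
  exact ⟨Iff.rfl, fun hpos =>
    (inv_diagonal_sub_apply_nonneg hA hdom i j).antisymm' (not_lt.mp hpos)⟩

/-- An entry `ω_{ij}` of `Ω = (I + L)⁻¹` is strictly positive iff there is some `k ≥ 0` with
`(A^k)_{ij} > 0` (i.e. `i = j` or there is a directed path of positive-weight arcs from `i`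
to `j`); otherwise `ω_{ij} = 0`. -/
theorem stmt_13 (n : ℕ) (hn : 0 < n) (A : Matrix (Fin n) (Fin n) ℝ)
    (hA : ∀ i j, 0 ≤ A i j)
    (D : Matrix (Fin n) (Fin n) ℝ) (hD : D = Matrix.diagonal (fun i => ∑ j, A i j))
    (L : Matrix (Fin n) (Fin n) ℝ) (hL : L = D - A) :
    ∀ i j, (0 < (1 + L)⁻¹ i j ↔ ∃ k : ℕ, 0 < (A ^ k) i j) ∧
      ((¬ ∃ k : ℕ, 0 < (A ^ k) i j) → (1 + L)⁻¹ i j = 0) :=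
  stmt_13_general n A hA D hD L hL
end
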